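/- arXiv:1512.06353 — 3 statements merged into one kernel-verified Lean document; each statement's English description precedes it below -/
import Mathlib

section
/- Let C_ℓ ≥ 0, and let airplanes A_i, A_j have volumes v_i, v_j > 0 and rates c_i, c_j > 0 with v_i/c_i = v_j/c_j and c_i < c_j. Then v_i/(C_ℓ + c_i) + v_j/(C_ℓ + c_j + c_i) > v_j/(C_ℓ + c_j) + v_i/(C_ℓ + c_j + c_i). That is, placing the plane with smaller consumption rate first strictly increases the combined distance contribution of two adjacent planes. -/
/-!
Write `S = Cℓ + c_i + c_j`. Moving a plane from first to second position loses
`v/(Cℓ + c) - v/S = v c'/((Cℓ + c) S)`, where `c'` is the other plane's rate. Equal ratios make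
the numerators agree, `v_i c_j = v_j c_i`, so the plane with the smaller rate loses more, having the
smaller denominator; hence it should go first.
-/

theorem div_sub_div_add_eq {K : Type*} [Field K] (v : K) {x c : K} (hx : x ≠ 0) (hxc : x + c ≠ 0) :
    v / x - v / (x + c) = v * c / (x * (x + c)) := by
  field_simp
  ring

theorem swap_smaller_rate_first_general (Cℓ v_i v_j c_i c_j : ℝ)
    (hC : 0 ≤ Cℓ) (hvi : 0 < v_i) (hci : 0 < c_i)
    (hratio : v_i / c_i = v_j / c_j) (hlt : c_i < c_j) :
    v_j / (Cℓ + c_j) + v_i / (Cℓ + c_j + c_i) <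
      v_i / (Cℓ + c_i) + v_j / (Cℓ + c_i + c_j) := by
  have hcj : 0 < c_j := hci.trans hlt
  have hcross : v_i * c_j = v_j * c_i := (div_eq_div_iff hci.ne' hcj.ne').mp hratio
  have hS : Cℓ + c_j + c_i = Cℓ + c_i + c_j := add_right_comm _ _ _
  have loss_i : v_i / (Cℓ + c_i) - v_i / (Cℓ + c_i + c_j) =
      v_i * c_j / ((Cℓ + c_i) * (Cℓ + c_i + c_j)) :=
    div_sub_div_add_eq v_i (by positivity) (by positivity)
  have loss_j : v_j / (Cℓ + c_j) - v_j / (Cℓ + c_i + c_j) =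
      v_j * c_i / ((Cℓ + c_j) * (Cℓ + c_i + c_j)) := by
    rw [← hS]
    exact div_sub_div_add_eq v_j (by positivity) (by positivity)
  have hloss : v_j * c_i / ((Cℓ + c_j) * (Cℓ + c_i + c_j)) <
      v_i * c_j / ((Cℓ + c_i) * (Cℓ + c_i + c_j)) := hcross ▸
    div_lt_div_of_pos_left (by positivity) (by positivity)
      (mul_lt_mul_of_pos_right (by linarith) (by positivity))
  rw [hS]
  linarith

/-- With equal ratios `v_i/c_i = v_j/c_j` and `c_i < c_j`, placing the plane with the
smaller consumption rate first strictly increases the combined contribution. -/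
theorem swap_smaller_rate_first (Cℓ v_i v_j c_i c_j : ℝ)
    (hC : 0 ≤ Cℓ) (hvi : 0 < v_i) (hvj : 0 < v_j) (hci : 0 < c_i) (hcj : 0 < c_j)
    (hratio : v_i / c_i = v_j / c_j) (hlt : c_i < c_j) :
    v_j / (Cℓ + c_j) + v_i / (Cℓ + c_j + c_i) <
      v_i / (Cℓ + c_i) + v_j / (Cℓ + c_i + c_j) :=
  swap_smaller_rate_first_general Cℓ v_i v_j c_i c_j hC hvi hci hratio hlt
end

section
/- Given an airplane refueling instance where all planes have the same ratio v_j/c_j = ρ, any permutation that orders the airplanes by non-decreasing c_j values maximizes the objective D(π) = ∑_{j=1}^n v_{π(j)} / (∑_{k=1}^j c_{π(k)}). -/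
/-!
With `v = ρ c`, the objective is `ρ` times `∑_j c_{π j} / (c_{π 0} + ⋯ + c_{π j})`. Exchanging two
adjacent planes only changes their own two terms, and putting the smaller consumption rate first
does not decrease them. So insertion sort, which is a sequence of such exchanges, never decreases
the objective, and it ends at the non-decreasing order.
-/

open Finset

theorem Fin.sum_Iic_succ {M : Type*} [AddCommMonoid M] {n : ℕ} (f : Fin (n + 1) → M)
    (i : Fin n) : ∑ k ∈ Iic i.succ, f k = f 0 + ∑ k ∈ Iic i, f k.succ := by
  rw [← Icc_bot, bot_eq_zero, ← Ioc_insert_left (Fin.zero_le _), sum_insert left_notMem_Ioc,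
    ← map_succEmb_Iic, sum_map]
  rfl

/-- `sumDivPrefixSum a [x₀, …, xₘ] = ∑ⱼ xⱼ / (a + x₀ + ⋯ + xⱼ)`. -/
noncomputable def sumDivPrefixSum (a : ℝ) : List ℝ → ℝ
  | [] => 0
  | x :: l => x / (a + x) + sumDivPrefixSum (a + x) l

theorem sum_div_add_sum_Iic_eq_sumDivPrefixSum (a : ℝ) {n : ℕ} (g : Fin n → ℝ) :
    ∑ j, g j / (a + ∑ k ∈ Iic j, g k) = sumDivPrefixSum a (List.ofFn g) := by
  induction n generalizing a with
  | zero => simp [sumDivPrefixSum]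
  | succ n ih =>
    have h0 : Iic (0 : Fin (n + 1)) = {0} := Iic_bot
    simp only [Fin.sum_univ_succ, Fin.sum_Iic_succ, List.ofFn_succ, sumDivPrefixSum, ← ih, h0,
      sum_singleton, add_assoc]

theorem div_add_div_le_div_add_div_of_le {a x y : ℝ} (ha : 0 ≤ a) (hx : 0 < x) (hy : 0 < y)
    (hyx : y ≤ x) : x / (a + x) + y / (a + x + y) ≤ y / (a + y) + x / (a + x + y) := by
  rw [div_add_div _ _ (by positivity) (by positivity),
    div_add_div _ _ (by positivity) (by positivity), div_le_div_iff₀ (by positivity) (by positivity)]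
  nlinarith [mul_nonneg (mul_nonneg hx.le hy.le) (sub_nonneg.2 hyx), mul_pos hx hy]

theorem sumDivPrefixSum_le_swap {a x y : ℝ} (l : List ℝ) (ha : 0 ≤ a) (hx : 0 < x) (hy : 0 < y)
    (hyx : y ≤ x) : sumDivPrefixSum a (x :: y :: l) ≤ sumDivPrefixSum a (y :: x :: l) := by
  simp only [sumDivPrefixSum, add_right_comm a y x]
  linarith [div_add_div_le_div_add_div_of_le ha hx hy hyx]

theorem sumDivPrefixSum_le_orderedInsert {a x : ℝ} {l : List ℝ} (ha : 0 ≤ a) (hx : 0 < x)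
    (hl : ∀ y ∈ l, 0 < y) :
    sumDivPrefixSum a (x :: l) ≤ sumDivPrefixSum a (l.orderedInsert (· ≤ ·) x) := by
  induction l generalizing a with
  | nil => rfl
  | cons y l ih =>
    rw [List.forall_mem_cons] at hl
    rw [List.orderedInsert_cons]
    split_ifs with hxy
    · rfl
    · calc sumDivPrefixSum a (x :: y :: l)
          ≤ sumDivPrefixSum a (y :: x :: l) :=
            sumDivPrefixSum_le_swap l ha hx hl.1 (not_le.1 hxy).le
        _ ≤ sumDivPrefixSum a (y :: l.orderedInsert (· ≤ ·) x) :=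
            add_le_add le_rfl (ih (add_nonneg ha hl.1.le) hl.2)

theorem sumDivPrefixSum_le_insertionSort {a : ℝ} {l : List ℝ} (ha : 0 ≤ a)
    (hl : ∀ y ∈ l, 0 < y) :
    sumDivPrefixSum a l ≤ sumDivPrefixSum a (l.insertionSort (· ≤ ·)) := by
  induction l generalizing a with
  | nil => rfl
  | cons x l ih =>
    rw [List.forall_mem_cons] at hl
    calc sumDivPrefixSum a (x :: l)
        ≤ sumDivPrefixSum a (x :: l.insertionSort (· ≤ ·)) :=
          add_le_add le_rfl (ih (add_nonneg ha hl.1.le) hl.2)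
      _ ≤ sumDivPrefixSum a ((x :: l).insertionSort (· ≤ ·)) :=
          sumDivPrefixSum_le_orderedInsert ha hl.1 fun y hy =>
            hl.2 y ((List.mem_insertionSort _).1 hy)

theorem sum_div_sum_Iic_comp_le_of_monotone {n : ℕ} {g : Fin n → ℝ} (hg : ∀ j, 0 < g j)
    (σ π : Equiv.Perm (Fin n)) (hπ : Monotone (g ∘ π)) :
    ∑ j, g (σ j) / ∑ k ∈ Iic j, g (σ k) ≤ ∑ j, g (π j) / ∑ k ∈ Iic j, g (π k) := by
  have hobj (e : Equiv.Perm (Fin n)) :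
      ∑ j, g (e j) / ∑ k ∈ Iic j, g (e k) = sumDivPrefixSum 0 (List.ofFn (g ∘ e)) := by
    simpa only [zero_add, Function.comp_apply] using
      sum_div_add_sum_Iic_eq_sumDivPrefixSum 0 (g ∘ e)
  have hsort : (List.ofFn (g ∘ σ)).insertionSort (· ≤ ·) = List.ofFn (g ∘ π) :=
    List.Perm.eq_of_sortedLE List.sortedLE_insertionSort hπ.sortedLE_ofFn <|
      (List.perm_insertionSort _ _).trans <| (σ.ofFn_comp_perm g).trans (π.ofFn_comp_perm g).symm
  rw [hobj, hobj, ← hsort]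
  exact sumDivPrefixSum_le_insertionSort le_rfl <| by simp [List.mem_ofFn, hg]

/-- If all ratios `v_j / c_j` are equal to `ρ`, then any permutation ordering the planes
by non-decreasing consumption rate maximizes the objective
`D(π) = ∑_j v_{π(j)} / ∑_{k ≤ j} c_{π(k)}`. -/
theorem greedy_optimal_equal_ratios (n : ℕ) (v c : Fin n → ℝ) (ρ : ℝ)
    (hv : ∀ j, 0 < v j) (hc : ∀ j, 0 < c j)
    (hratio : ∀ j, v j / c j = ρ)
    (π : Equiv.Perm (Fin n)) (hsorted : ∀ i j : Fin n, i ≤ j → c (π i) ≤ c (π j))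
    (σ : Equiv.Perm (Fin n)) :
    ∑ j : Fin n, v (σ j) / (∑ k ∈ Finset.Iic j, c (σ k)) ≤
      ∑ j : Fin n, v (π j) / (∑ k ∈ Finset.Iic j, c (π k)) := by
  rcases isEmpty_or_nonempty (Fin n) with hn | ⟨⟨j₀⟩⟩
  · simp
  have hv_eq (j : Fin n) : v j = ρ * c j := by rw [← hratio j, div_mul_cancel₀ _ (hc j).ne']
  have hρ : 0 ≤ ρ := hratio j₀ ▸ (div_pos (hv j₀) (hc j₀)).le
  simp only [hv_eq, mul_div_assoc, ← mul_sum]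
  exact mul_le_mul_of_nonneg_left
    (sum_div_sum_Iic_comp_le_of_monotone hc σ π fun i j hij => hsorted i j hij) hρ
end

section
/- Random class deletion preserves value in expectation: partition planes into classes S_1, S_2, … and for r drawn uniformly from {0,…,1/ε−1}, delete all classes S_ℓ with ℓ ≡ r (mod 1/ε). The expected optimal objective of the surviving instance is at least (1−ε)·OPT. -/
/-- The airplane refueling objective of a drop-out ordering given as a list, with `acc`
the accumulated consumption rate of earlier planes. -/
noncomputable def refuelValue {α : Type*} (v c : α → ℝ) : List α → ℝ → ℝ
  | [], _ => 0
  | a :: t, acc => v a / (acc + c a) + refuelValue v c t (acc + c a)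

/-- The optimal objective value over all orderings of the planes of `T`. -/
noncomputable def refuelOpt {α : Type*} [DecidableEq α] (v c : α → ℝ) (T : Finset α) : ℝ :=
  sSup {x : ℝ | ∃ l : List α, l.Nodup ∧ l.toFinset = T ∧ x = refuelValue v c l 0}

/-!
Fix any ordering `l` of all planes. For each `r`, keep `l` but zero the value of every
plane in a deleted class: this is at most the value of the ordering `l` restricted to the
survivors, because the survivors then see less accumulated consumption. The zeroed objectives
are linear in the values, and each plane is zeroed for exactly one of the `m` choices of `r`, so
they sum to `(m - 1)` times the value of `l`.
-/

namespace RefuelValue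

variable {α : Type*} {v c : α → ℝ}

theorem sum_left {ι : Type*} (s : Finset ι) (w : ι → α → ℝ) (c : α → ℝ) :
    ∀ (l : List α) (acc : ℝ),
      ∑ i ∈ s, refuelValue (w i) c l acc = refuelValue (fun a => ∑ i ∈ s, w i a) c l acc
  | [], _ => by simp [refuelValue]
  | a :: t, acc => by
      simp only [refuelValue, Finset.sum_add_distrib, Finset.sum_div, sum_left s w c t]

theorem const_mul_left (k : ℝ) (v c : α → ℝ) :
    ∀ (l : List α) (acc : ℝ), refuelValue (fun a => k * v a) c l acc = k * refuelValue v c l acc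
  | [], _ => by simp [refuelValue]
  | a :: t, acc => by
      simp only [refuelValue, const_mul_left k v c t, mul_add, mul_div_assoc]

theorem antitone_acc (hv : ∀ a, 0 ≤ v a) (hc : ∀ a, 0 < c a) :
    ∀ (l : List α) {acc₁ acc₂ : ℝ}, 0 ≤ acc₁ → acc₁ ≤ acc₂ →
      refuelValue v c l acc₂ ≤ refuelValue v c l acc₁
  | [], _, _, _, _ => le_rfl
  | a :: t, acc₁, acc₂, h₀, h₁₂ => by
      have hpos : 0 < acc₁ + c a := by linarith [hc a]
      have hle : acc₁ + c a ≤ acc₂ + c a := by linarith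
      exact add_le_add (div_le_div_of_nonneg_left (hv a) hpos hle)
        (antitone_acc hv hc t hpos.le hle)

theorem ite_le_filter (hv : ∀ a, 0 ≤ v a) (hc : ∀ a, 0 < c a) (p : α → Bool) :
    ∀ (l : List α) {acc : ℝ}, 0 ≤ acc →
      refuelValue (fun a => if p a then v a else 0) c l acc ≤ refuelValue v c (l.filter p) acc
  | [], _, _ => le_rfl
  | a :: t, acc, hacc => by
      have hpos : 0 < acc + c a := by linarith [hc a]
      have ih := ite_le_filter hv hc p t hpos.le
      cases hpa : p a
      · simp only [refuelValue, hpa, List.filter_cons, Bool.false_eq_true, if_false, zero_div,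
          zero_add]
        exact ih.trans (antitone_acc hv hc _ hacc (by linarith [hc a]))
      · simp only [refuelValue, hpa, List.filter_cons, if_true]
        exact add_le_add le_rfl ih

theorem sum_ite_mod_ne (cls : α → ℕ) {m : ℕ} (hm : 0 < m) (l : List α) (acc : ℝ) :
    ∑ r ∈ Finset.range m, refuelValue (fun a => if cls a % m ≠ r then v a else 0) c l acc =
      (m - 1 : ℝ) * refuelValue v c l acc := by
  have hcount (a : α) : ∑ r ∈ Finset.range m, (if cls a % m ≠ r then v a else 0) =
      (m - 1 : ℝ) * v a := by
    rw [Finset.sum_ite, Finset.sum_const_zero, add_zero, Finset.sum_const, nsmul_eq_mul,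
      Finset.filter_ne, Finset.card_erase_of_mem (Finset.mem_range.2 (Nat.mod_lt _ hm)),
      Finset.card_range, Nat.cast_sub hm, Nat.cast_one]
  rw [sum_left, ← const_mul_left]
  simp only [hcount]

end RefuelValue

namespace RefuelOpt

variable {α : Type*} [DecidableEq α] {v c : α → ℝ}

/-- Every ordering of `T` is a permutation of `T.toList`, so there are finitely many values. -/
theorem finite_values (v c : α → ℝ) (T : Finset α) :
    {x : ℝ | ∃ l : List α, l.Nodup ∧ l.toFinset = T ∧ x = refuelValue v c l 0}.Finite := by
  refine ((T.toList.permutations.toFinset : Set (List α)).toFinite.image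
    (fun l => refuelValue v c l 0)).subset ?_
  rintro x ⟨l, hnd, hT, rfl⟩
  refine ⟨l, ?_, rfl⟩
  rw [Finset.mem_coe, List.mem_toFinset, List.mem_permutations]
  exact List.perm_of_nodup_nodup_toFinset_eq hnd T.nodup_toList (by rw [hT, Finset.toList_toFinset])

theorem refuelValue_le (l : List α) (hl : l.Nodup) :
    refuelValue v c l 0 ≤ refuelOpt v c l.toFinset :=
  le_csSup (finite_values v c _).bddAbove ⟨l, hl, rfl, rfl⟩

theorem mul_le_of_forall {k B : ℝ} (hk : 0 ≤ k) (T : Finset α)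
    (h : ∀ l : List α, l.Nodup → l.toFinset = T → k * refuelValue v c l 0 ≤ B) :
    k * refuelOpt v c T ≤ B := by
  rw [refuelOpt, ← smul_eq_mul, ← Real.sSup_smul_of_nonneg hk]
  refine csSup_le
    (Set.smul_set_nonempty.2 ⟨_, T.toList, T.nodup_toList, T.toList_toFinset, rfl⟩) ?_
  rintro _ ⟨_, ⟨l, hl, hT, rfl⟩, rfl⟩
  exact h l hl hT

theorem sub_one_mul_le_sum_filter_mod_ne [Fintype α] (hv : ∀ a, 0 ≤ v a) (hc : ∀ a, 0 < c a)
    (cls : α → ℕ) {m : ℕ} (hm : 0 < m) :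
    (m - 1 : ℝ) * refuelOpt v c Finset.univ ≤
      ∑ r ∈ Finset.range m, refuelOpt v c (Finset.univ.filter fun a => cls a % m ≠ r) := by
  refine mul_le_of_forall (sub_nonneg.2 (Nat.one_le_cast.2 hm)) _ fun l hl hT => ?_
  rw [← RefuelValue.sum_ite_mod_ne cls hm]
  refine Finset.sum_le_sum fun r _ => ?_
  have hfilter : (l.filter fun a => cls a % m ≠ r).toFinset =
      Finset.univ.filter fun a => cls a % m ≠ r := by
    ext a
    simp [hT]
  calc refuelValue (fun a => if cls a % m ≠ r then v a else 0) c l 0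
      ≤ refuelValue v c (l.filter fun a => cls a % m ≠ r) 0 := by
        simpa using RefuelValue.ite_le_filter hv hc (fun a => cls a % m ≠ r) l le_rfl
    _ ≤ refuelOpt v c (Finset.univ.filter fun a => cls a % m ≠ r) :=
        hfilter ▸ refuelValue_le _ (hl.filter _)

end RefuelOpt

open Classical in
/-- Random class deletion preserves value in expectation: partition the planes into
classes `cls`, draw `r` uniformly from `{0, …, m − 1}` (where `m = 1/ε`), and delete
all planes whose class is `≡ r (mod m)`.  The expected optimum of the surviving
instance is at least `(1 − ε) · OPT`. -/
theorem random_class_deletion (n : ℕ) (v c : Fin n → ℝ)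
    (hv : ∀ j, 0 < v j) (hc : ∀ j, 0 < c j)
    (cls : Fin n → ℕ) (m : ℕ) (hm : 0 < m) (ε : ℝ) (hε : ε = 1 / m) :
    (1 - ε) * refuelOpt v c Finset.univ ≤
      (∑ r ∈ Finset.range m,
        refuelOpt v c (Finset.univ.filter fun j => cls j % m ≠ r)) / m := by
  have hmR : (0 : ℝ) < m := Nat.cast_pos.mpr hm
  have hε' : 1 - ε = (m - 1 : ℝ) / m := by rw [hε]; field_simp
  rw [hε', div_mul_eq_mul_div]
  exact div_le_div_of_nonneg_right
    (RefuelOpt.sub_one_mul_le_sum_filter_mod_ne (fun j => (hv j).le) hc cls hm) hmR.le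
end
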